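/- For all ε ∈ ℝ, all Schwartz functions f, g : ℝ² → ℂ, and every point (x,y) ∈ ℝ², the semiclassical limit holds: lim_{ℏ → 0⁺} (f ⋆_{ℏ,ε} g)(x,y) = f(x,y) · g(x,y). -/

import Mathlib

open MeasureTheory Complex Filter

/-- The ε-deformed kernel at base point `m = (x,y)`, on `a = (x'',y'')`, `b = (x',y')`:
`exp((i/ℏ)·[(x''−x)(y−y') − (y''−y)(x−x') + ε(y·y' − y'·y'' + y·y'' − y²)])`. -/
noncomputable def epsKernel (ℏ ε : ℝ) (m a b : ℝ × ℝ) : ℂ :=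
  Complex.exp (Complex.I / ℏ *
    (((a.1 - m.1) * (m.2 - b.2) - (a.2 - m.2) * (m.1 - b.1)
      + ε * (m.2 * b.2 - b.2 * a.2 + m.2 * a.2 - m.2 ^ 2) : ℝ) : ℂ))

/-- The ε-deformed product `(f ⋆_{ℏ,ε} g)(x,y)`. -/
noncomputable def moyalEps (ℏ ε : ℝ) (f g : ℝ × ℝ → ℂ) : ℝ × ℝ → ℂ :=
  fun m => ((2 * Real.pi * ℏ) ^ 2 : ℝ)⁻¹ •
    ∫ ab : (ℝ × ℝ) × (ℝ × ℝ), f ab.1 * g ab.2 * epsKernel ℏ ε m ab.1 ab.2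

/-- Partial derivative in the first (x) variable. -/
noncomputable def pderivX (f : ℝ × ℝ → ℂ) (m : ℝ × ℝ) : ℂ := fderiv ℝ f m (1, 0)

/-- Partial derivative in the second (y) variable. -/
noncomputable def pderivY (f : ℝ × ℝ → ℂ) (m : ℝ × ℝ) : ℂ := fderiv ℝ f m (0, 1)

/-- The Poisson bracket `{f,g} = ∂ₓf·∂_yg − ∂_yf·∂ₓg` on ℝ². -/
noncomputable def pbracket (f g : ℝ × ℝ → ℂ) (m : ℝ × ℝ) : ℂ :=
  pderivX f m * pderivY g m - pderivY f m * pderivX g m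

/-!
Integrating out `a` first turns the `a`-integral into the Fourier transform `F` of `f` recentred
at `m`, evaluated at a point obtained from `(m - b) / ℏ` by a shear `S` of determinant one; this
is the only place where `ε` enters. After the substitution `b = m - ℏ • S c` the Jacobian `ℏ²`
cancels the prefactor's `ℏ⁻²`, leaving `(2π)⁻² ∫ g (m - ℏ • S c) F(c) dc`. As `ℏ → 0` dominated
convergence gives `(2π)⁻² g(m) ∫ F`, and Fourier inversion (on `ℝ²` viewed as
`EuclideanSpace ℝ (Fin 2)`) gives `∫ F = (2π)² f(m)`.
-/

open Real SchwartzMap Module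
open scoped FourierTransform RealInnerProductSpace

section FourierInversion

variable {V : Type*} [NormedAddCommGroup V] [InnerProductSpace ℝ V] [FiniteDimensional ℝ V]
  [MeasurableSpace V] [BorelSpace V]

lemma integral_mul_cexp_neg_inner_sub (f : V → ℂ) (m c : V) :
    ∫ a, f a * cexp (-I * (⟪a - m, c⟫ : ℝ)) =
      cexp (I * (⟪m, c⟫ : ℝ)) * 𝓕 f ((2 * π)⁻¹ • c) := by
  rw [Real.fourier_eq', ← integral_const_mul]
  congr 1 with a
  rw [smul_eq_mul, mul_comm (f a), ← mul_assoc, ← Complex.exp_add, inner_sub_left,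
    real_inner_smul_right]
  congr 2
  push_cast
  field_simp
  ring

lemma integrable_integral_mul_cexp_neg_inner_sub {f : V → ℂ} (hf : Integrable (𝓕 f)) (m : V) :
    Integrable (fun c => ∫ a, f a * cexp (-I * (⟪a - m, c⟫ : ℝ))) := by
  simp_rw [integral_mul_cexp_neg_inner_sub]
  refine (hf.comp_smul (inv_ne_zero (by positivity))).bdd_mul (c := 1) (by fun_prop) ?_
  filter_upwards with c
  rw [mul_comm I, Complex.norm_exp_ofReal_mul_I]

lemma integral_integral_mul_cexp_neg_inner_sub {f : V → ℂ} (hf : Integrable f)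
    (hf' : Integrable (𝓕 f)) {m : V} (hm : ContinuousAt f m) :
    ∫ c, ∫ a, f a * cexp (-I * (⟪a - m, c⟫ : ℝ)) = (2 * π) ^ finrank ℝ V • f m := by
  have hphase (c : V) : cexp (I * (⟪m, c⟫ : ℝ)) =
      cexp (((2 * π * ⟪(2 * π)⁻¹ • c, m⟫ : ℝ) : ℂ) * I) := by
    rw [real_inner_smul_left, real_inner_comm, mul_comm _ I]
    field_simp
  simp_rw [integral_mul_cexp_neg_inner_sub, hphase]
  rw [Measure.integral_comp_smul volume (fun ξ => cexp (((2 * π * ⟪ξ, m⟫ : ℝ) : ℂ) * I) * 𝓕 f ξ),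
    ← hf.fourierInv_fourier_eq hf' hm, Real.fourierInv_eq']
  simp only [inv_pow, inv_inv, smul_eq_mul]
  rw [abs_of_pos (by positivity)]

end FourierInversion

noncomputable def euclideanEquivProd : EuclideanSpace ℝ (Fin 2) ≃L[ℝ] ℝ × ℝ :=
  (EuclideanSpace.equiv (Fin 2) ℝ).trans (ContinuousLinearEquiv.finTwoArrow ℝ ℝ)

lemma measurePreserving_euclideanEquivProd : MeasurePreserving euclideanEquivProd :=
  (volume_preserving_finTwoArrow ℝ).comp
    (EuclideanSpace.volume_preserving_symm_measurableEquiv_toLp (Fin 2))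

lemma integral_comp_euclideanEquivProd {E : Type*} [NormedAddCommGroup E] [NormedSpace ℝ E]
    (φ : ℝ × ℝ → E) : ∫ v, φ (euclideanEquivProd v) = ∫ a, φ a :=
  measurePreserving_euclideanEquivProd.integral_comp
    euclideanEquivProd.toHomeomorph.measurableEmbedding φ

lemma integrable_comp_euclideanEquivProd_iff {E : Type*} [NormedAddCommGroup E] {φ : ℝ × ℝ → E} :
    Integrable (fun v => φ (euclideanEquivProd v)) ↔ Integrable φ :=
  measurePreserving_euclideanEquivProd.integrable_comp_emb
    euclideanEquivProd.toHomeomorph.measurableEmbedding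

noncomputable def recenteredFourier (f : ℝ × ℝ → ℂ) (m c : ℝ × ℝ) : ℂ :=
  ∫ a, f a * cexp (-I * (((a.1 - m.1) * c.1 + (a.2 - m.2) * c.2 : ℝ) : ℂ))

lemma recenteredFourier_euclideanEquivProd (f : ℝ × ℝ → ℂ) (m : ℝ × ℝ)
    (ξ : EuclideanSpace ℝ (Fin 2)) :
    recenteredFourier f m (euclideanEquivProd ξ) =
      ∫ v, f (euclideanEquivProd v) * cexp (-I * (⟪v - euclideanEquivProd.symm m, ξ⟫ : ℝ)) := by
  rw [recenteredFourier, ← integral_comp_euclideanEquivProd]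
  congr 1 with v
  simp [PiLp.inner_apply, Fin.sum_univ_two, euclideanEquivProd, mul_comm]

section Schwartz

variable (f : 𝓢(ℝ × ℝ, ℂ)) (m : ℝ × ℝ)

lemma integrable_recenteredFourier : Integrable (recenteredFourier f m) := by
  set F := compCLMOfContinuousLinearEquiv ℝ euclideanEquivProd f
  rw [← integrable_comp_euclideanEquivProd_iff]
  simp_rw [recenteredFourier_euclideanEquivProd]
  exact integrable_integral_mul_cexp_neg_inner_sub (f := F) (𝓕 F).integrable _

lemma integral_recenteredFourier : ∫ c, recenteredFourier f m c = (2 * π) ^ 2 • f m := by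
  set F := compCLMOfContinuousLinearEquiv ℝ euclideanEquivProd f
  rw [← integral_comp_euclideanEquivProd]
  simp_rw [recenteredFourier_euclideanEquivProd]
  simpa [F] using integral_integral_mul_cexp_neg_inner_sub F.integrable (𝓕 F).integrable
    (F.continuous.continuousAt (x := euclideanEquivProd.symm m))

end Schwartz

section ChangeOfVariables

variable {E F : Type*} [NormedAddCommGroup E] [NormedSpace ℝ E] [FiniteDimensional ℝ E]
  [MeasurableSpace E] [BorelSpace E] (μ : Measure E) [μ.IsAddHaarMeasure]
  [NormedAddCommGroup F] [NormedSpace ℝ F]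

lemma LinearMap.measurePreserving_of_abs_det_eq_one {T : E →ₗ[ℝ] E}
    (hT : |LinearMap.det T| = 1) : MeasurePreserving T μ μ where
  measurable := T.continuous_of_finiteDimensional.measurable
  map_eq := by
    rw [Measure.map_linearMap_addHaar_eq_smul_addHaar μ (by simp [← abs_ne_zero, hT]),
      abs_inv, hT]
    simp

lemma integral_comp_sub_smul_of_measurePreserving {T : E → E} (hT : MeasurePreserving T μ μ)
    (hT' : MeasurableEmbedding T) (φ : E → F) (m : E) (t : ℝ) :
    ∫ c, φ (m - t • T c) ∂μ = |(t ^ finrank ℝ E)⁻¹| • ∫ b, φ b ∂μ := by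
  rw [hT.integral_comp hT' (fun u => φ (m - t • u)),
    Measure.integral_comp_smul μ (fun u => φ (m - u)), integral_sub_left_eq_self]

end ChangeOfVariables

noncomputable def epsShear (ε : ℝ) : (ℝ × ℝ) ≃L[ℝ] ℝ × ℝ :=
  LinearEquiv.toContinuousLinearEquiv
    { toFun := fun c => (c.2 - ε * c.1, -c.1)
      invFun := fun d => (-d.2, d.1 - ε * d.2)
      map_add' := fun c d => by ext <;> simp only [Prod.fst_add, Prod.snd_add] <;> ring
      map_smul' := fun t c => by
        ext <;> simp only [Prod.smul_fst, Prod.smul_snd, smul_eq_mul, RingHom.id_apply] <;> ring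
      left_inv := fun c => by ext <;> simp
      right_inv := fun d => by ext <;> simp }

@[simp] lemma epsShear_apply (ε : ℝ) (c : ℝ × ℝ) : epsShear ε c = (c.2 - ε * c.1, -c.1) := rfl

lemma det_epsShear (ε : ℝ) : LinearMap.det (epsShear ε : (ℝ × ℝ) →ₗ[ℝ] ℝ × ℝ) = 1 := by
  rw [← LinearMap.det_toMatrix (Basis.finTwoProd ℝ), Matrix.det_fin_two]
  simp [LinearMap.toMatrix_apply]

lemma measurePreserving_epsShear (ε : ℝ) : MeasurePreserving (epsShear ε) :=
  LinearMap.measurePreserving_of_abs_det_eq_one volume (by rw [det_epsShear, abs_one])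

lemma epsKernel_sub_smul_epsShear {ℏ : ℝ} (hℏ : ℏ ≠ 0) (ε : ℝ) (m a c : ℝ × ℝ) :
    epsKernel ℏ ε m a (m - ℏ • epsShear ε c) =
      cexp (-I * (((a.1 - m.1) * c.1 + (a.2 - m.2) * c.2 : ℝ) : ℂ)) := by
  have hℏ' : (ℏ : ℂ) ≠ 0 := Complex.ofReal_ne_zero.mpr hℏ
  rw [epsKernel]
  congr 1
  simp only [epsShear_apply, Prod.fst_sub, Prod.snd_sub, Prod.smul_fst, Prod.smul_snd,
    smul_eq_mul]
  push_cast
  field_simp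
  ring

lemma norm_epsKernel (ℏ ε : ℝ) (m a b : ℝ × ℝ) : ‖epsKernel ℏ ε m a b‖ = 1 := by
  simp [epsKernel, Complex.norm_exp, pow_two]

lemma integrable_mul_epsKernel {f g : ℝ × ℝ → ℂ} (hf : Integrable f) (hg : Integrable g)
    (ℏ ε : ℝ) (m : ℝ × ℝ) :
    Integrable (fun ab : (ℝ × ℝ) × (ℝ × ℝ) => f ab.1 * g ab.2 * epsKernel ℏ ε m ab.1 ab.2) := by
  have hfg : Integrable (fun ab : (ℝ × ℝ) × (ℝ × ℝ) => f ab.1 * g ab.2) := by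
    rw [Measure.volume_eq_prod]
    exact hf.mul_prod hg
  refine hfg.mul_bdd (c := 1) ?_ ?_
  · refine Continuous.aestronglyMeasurable ?_
    unfold epsKernel
    fun_prop
  · filter_upwards with ab
    rw [norm_epsKernel]

lemma moyalEps_eq_integral_epsShear {ℏ : ℝ} (hℏ : ℏ ≠ 0) (ε : ℝ) {f g : ℝ × ℝ → ℂ}
    (hf : Integrable f) (hg : Integrable g) (m : ℝ × ℝ) :
    moyalEps ℏ ε f g m =
      ((2 * π) ^ 2)⁻¹ • ∫ c, g (m - ℏ • epsShear ε c) * recenteredFourier f m c := by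
  set ψ : ℝ × ℝ → ℂ := fun b => g b * ∫ a, f a * epsKernel ℏ ε m a b
  have hfubini : ∫ ab : (ℝ × ℝ) × (ℝ × ℝ), f ab.1 * g ab.2 * epsKernel ℏ ε m ab.1 ab.2
      = ∫ b, ψ b := by
    have hint := integrable_mul_epsKernel hf hg ℏ ε m
    rw [Measure.volume_eq_prod] at hint ⊢
    rw [integral_prod_symm _ hint]
    congr 1 with b
    simp only [ψ, ← integral_const_mul]
    congr 1 with a
    ring
  have hsubst : ∫ c, ψ (m - ℏ • epsShear ε c) = (ℏ ^ 2)⁻¹ • ∫ b, ψ b := by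
    rw [integral_comp_sub_smul_of_measurePreserving volume (measurePreserving_epsShear ε)
      (epsShear ε).toHomeomorph.measurableEmbedding, finrank_prod, finrank_self,
      one_add_one_eq_two, abs_of_nonneg (by positivity)]
  have hψ (c : ℝ × ℝ) : ψ (m - ℏ • epsShear ε c) =
      g (m - ℏ • epsShear ε c) * recenteredFourier f m c := by
    simp only [ψ, recenteredFourier, epsKernel_sub_smul_epsShear hℏ]
  simp_rw [moyalEps, hfubini, ← hψ, hsubst, smul_smul]
  congr 1
  field_simp

lemma tendsto_integral_comp_sub_smul_mul {α E : Type*} [TopologicalSpace α] [MeasurableSpace α]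
    [OpensMeasurableSpace α] {μ : Measure α} [NormedAddCommGroup E] [NormedSpace ℝ E]
    {g : E → ℂ} (hg : Continuous g) {C : ℝ} (hC : ∀ x, ‖g x‖ ≤ C) {v : α → E}
    (hv : Continuous v) {φ : α → ℂ} (hφ : Integrable φ μ) (m : E) :
    Tendsto (fun t : ℝ => ∫ c, g (m - t • v c) * φ c ∂μ) (nhds 0)
      (nhds (g m * ∫ c, φ c ∂μ)) := by
  have hcont : Continuous fun t : ℝ => ∫ c, g (m - t • v c) * φ c ∂μ := by
    refine continuous_of_dominated (bound := fun c => C * ‖φ c‖)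
      (fun t => (hg.comp (by fun_prop)).aestronglyMeasurable.mul hφ.1)
      (fun t => Eventually.of_forall fun c => ?_) (hφ.norm.const_mul C)
      (Eventually.of_forall fun c => by fun_prop)
    rw [norm_mul]
    exact mul_le_mul_of_nonneg_right (hC _) (norm_nonneg _)
  simpa [integral_const_mul] using hcont.tendsto 0

/-- Semiclassical limit of the ε-deformed product:
`lim_{ℏ → 0⁺} (f ⋆_{ℏ,ε} g)(x,y) = f(x,y)·g(x,y)`. -/
theorem moyalEps_semiclassical_limit (ε : ℝ) (f g : SchwartzMap (ℝ × ℝ) ℂ) (m : ℝ × ℝ) :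
    Tendsto (fun ℏ : ℝ => moyalEps ℏ ε (⇑f) (⇑g) m) (nhdsWithin 0 (Set.Ioi 0))
      (nhds (f m * g m)) := by
  have hlim : Tendsto (fun ℏ : ℝ => ((2 * π) ^ 2)⁻¹ •
      ∫ c, g (m - ℏ • epsShear ε c) * recenteredFourier f m c) (nhds 0) (nhds (f m * g m)) := by
    have h := (tendsto_integral_comp_sub_smul_mul g.continuous (g.norm_le_seminorm ℝ)
      (epsShear ε).continuous (integrable_recenteredFourier f m) m).const_smul ((2 * π) ^ 2)⁻¹
    rwa [integral_recenteredFourier, mul_smul_comm, smul_smul, inv_mul_cancel₀ (by positivity),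
      one_smul, mul_comm (g m)] at h
  refine (hlim.mono_left nhdsWithin_le_nhds).congr' ?_
  filter_upwards [self_mem_nhdsWithin] with ℏ (hℏ : 0 < ℏ)
  rw [moyalEps_eq_integral_epsShear hℏ.ne' ε f.integrable g.integrable]
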